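/- Every $[p,q]$-graded $\lambda$-module $M$ over a graded $k$-algebra $A$ admits a Harder-Narasimhan filtration: a filtration $0 = M^0 \subset M^1 \subset \cdots \subset M^s = M$ by $\lambda$-submodules such that each quotient $M^i/M^{i-1}$ is semistable with respect to $(\theta_p,\theta_q) = (\dim M_q, -\dim M_p)$ and the successive quotients have strictly decreasing slopes in the sense $(M^1/M^0) \succ (M^2/M^1) \succ \cdots \succ (M^s/M^{s-1})$. -/

import Mathlib

/-! The Harder–Narasimhan argument runs in any sublattice `L` (here: the `λ`-submodules) of a
Noetherian lattice carrying a monotone rank and a degree that are both additive,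
`rk (a ⊔ b) + rk (a ⊓ b) = rk a + rk b`. Over `a ∈ L`, let `μ` be the largest slope over `a` of
an element of `L` of bigger rank. Then `a` maximizes the twisted degree `deg - μ • rk` among
the elements of `L` above it, so by additivity the maximizers are closed under `⊔` and have a
greatest element `b`. The step `[a, b]` is semistable of slope `μ`, and a step `[b, c]` of slope
`≥ μ` would make `c` a maximizer strictly above `b`. Noetherian induction iterates this up
to `⊤`. -/

section

variable {k A V : Type*} [Field k] [Ring A] [Algebra k A]
  [AddCommGroup V] [Module k V]

/-- `N` is a graded `λ`-submodule of the graded `λ`-module `(V, ℳ, lam)`: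
it is a graded subspace that is stable under the action map `lam`. -/
def IsLambdaSubmodule (ℳ : ℤ → Submodule k V) (lam : A →ₗ[k] V →ₗ[k] V)
    (N : Submodule k V) : Prop :=
  (N = ⨆ i, N ⊓ ℳ i) ∧ ∀ (a : A), ∀ v ∈ N, lam a v ∈ N

/-- Dimension of the degree-`i` part of a subspace `N`. -/
noncomputable def dimAt (ℳ : ℤ → Submodule k V) (N : Submodule k V) (i : ℤ) : ℤ :=
  (Module.finrank k ↥(N ⊓ ℳ i) : ℤ)

/-- Dimension in degree `i` of the quotient `B/Alow`. -/
noncomputable def qdim (ℳ : ℤ → Submodule k V) (Alow B : Submodule k V) (i : ℤ) : ℤ :=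
  dimAt ℳ B i - dimAt ℳ Alow i

/-- Slope `μ_{(θp,θq)}` of a (sub)quotient with dimensions `dp, dq` at degrees `p, q`. -/
noncomputable def slopeQ (θp θq dp dq : ℤ) : ℚ :=
  ((θp * dp + θq * dq : ℤ) : ℚ) / ((dp + dq : ℤ) : ℚ)

/-- Semistability with respect to `(θp,θq)` of the quotient `B/Alow`:
every intermediate `λ`-submodule either has zero dimension vector at `(p,q)` or slope
at most that of `B/Alow`. -/
noncomputable def SemistableQuot (ℳ : ℤ → Submodule k V) (lam : A →ₗ[k] V →ₗ[k] V)
    (p q θp θq : ℤ) (Alow B : Submodule k V) : Prop :=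
  ∀ N : Submodule k V, IsLambdaSubmodule ℳ lam N → Alow < N → N < B →
    (qdim ℳ Alow N p = 0 ∧ qdim ℳ Alow N q = 0) ∨
    ((qdim ℳ Alow N p + qdim ℳ Alow N q ≠ 0) ∧
      slopeQ θp θq (qdim ℳ Alow N p) (qdim ℳ Alow N q) ≤
        slopeQ θp θq (qdim ℳ Alow B p) (qdim ℳ Alow B q))

/-- The relation `(B₁/A₁) ≻ (B₂/A₂)` between two subquotients: either the second has zero
dimension vector at `(p,q)`, or both have nonzero dimension vectors and the first has
strictly bigger slope. -/
noncomputable def QuotGT (ℳ : ℤ → Submodule k V) (p q θp θq : ℤ)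
    (A1 B1 A2 B2 : Submodule k V) : Prop :=
  (qdim ℳ A2 B2 p = 0 ∧ qdim ℳ A2 B2 q = 0) ∨
  ((qdim ℳ A1 B1 p + qdim ℳ A1 B1 q ≠ 0) ∧ (qdim ℳ A2 B2 p + qdim ℳ A2 B2 q ≠ 0) ∧
    slopeQ θp θq (qdim ℳ A1 B1 p) (qdim ℳ A1 B1 q) >
      slopeQ θp θq (qdim ℳ A2 B2 p) (qdim ℳ A2 B2 q))

theorem SupClosed.exists_isGreatest {α : Type*} [SemilatticeSup α] [WellFoundedGT α] {s : Set α}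
    (hs : SupClosed s) (hne : s.Nonempty) : ∃ m, IsGreatest s m := by
  obtain ⟨m, hm, hmax⟩ := wellFounded_gt.has_min s hne
  refine ⟨m, hm, fun c hc => ?_⟩
  by_contra hcm
  exact hmax _ (hs hm hc) (left_lt_sup.2 hcm)

structure StabilityData {α : Type*} [Lattice α] (L : Sublattice α) where
  rk : α → ℚ
  deg : α → ℚ
  rk_mono : Monotone rk
  rk_sup_add_rk_inf : ∀ ⦃a⦄, a ∈ L → ∀ ⦃b⦄, b ∈ L →
    rk (a ⊔ b) + rk (a ⊓ b) = rk a + rk b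
  deg_sup_add_deg_inf : ∀ ⦃a⦄, a ∈ L → ∀ ⦃b⦄, b ∈ L →
    deg (a ⊔ b) + deg (a ⊓ b) = deg a + deg b
  deg_eq_of_le_of_rk_eq : ∀ ⦃a b⦄, a ≤ b → rk a = rk b → deg a = deg b
  finite_range : (Set.range fun a => (rk a, deg a)).Finite

namespace StabilityData

variable {α : Type*} [Lattice α] {L : Sublattice α} (D : StabilityData L)

def slope (a b : α) : ℚ := (D.deg b - D.deg a) / (D.rk b - D.rk a)

def Semistable (a b : α) : Prop :=
  ∀ c ∈ L, a < c → c < b → D.rk c = D.rk a ∨ D.slope a c ≤ D.slope a b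

def SlopeGT (a b c d : α) : Prop :=
  D.rk c = D.rk d ∨ (D.rk a ≠ D.rk b ∧ D.rk c ≠ D.rk d ∧ D.slope c d < D.slope a b)

def twistedDeg (μ : ℚ) (a : α) : ℚ := D.deg a - μ * D.rk a

variable {D}

theorem slope_le_iff {a b : α} (h : D.rk a < D.rk b) {μ : ℚ} :
    D.slope a b ≤ μ ↔ D.twistedDeg μ b ≤ D.twistedDeg μ a := by
  rw [slope, div_le_iff₀ (sub_pos.2 h), twistedDeg, twistedDeg]
  constructor <;> intro <;> linarith

theorem le_slope_iff {a b : α} (h : D.rk a < D.rk b) {μ : ℚ} :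
    μ ≤ D.slope a b ↔ D.twistedDeg μ a ≤ D.twistedDeg μ b := by
  rw [slope, le_div_iff₀ (sub_pos.2 h), twistedDeg, twistedDeg]
  constructor <;> intro <;> linarith

theorem twistedDeg_sup_add_inf {a b : α} (ha : a ∈ L) (hb : b ∈ L) (μ : ℚ) :
    D.twistedDeg μ (a ⊔ b) + D.twistedDeg μ (a ⊓ b) =
      D.twistedDeg μ a + D.twistedDeg μ b := by
  simp only [twistedDeg]
  linear_combination D.deg_sup_add_deg_inf ha hb - μ * D.rk_sup_add_rk_inf ha hb

theorem finite_slope_image (a : α) (s : Set α) : (D.slope a '' s).Finite := by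
  refine (D.finite_range.image fun x => (x.2 - D.deg a) / (x.1 - D.rk a)).subset ?_
  rintro _ ⟨b, -, rfl⟩
  exact ⟨_, ⟨b, rfl⟩, rfl⟩

theorem exists_twistedDeg_le {a : α} (hne : ∃ c ∈ L, a ≤ c ∧ D.rk a < D.rk c) :
    ∃ c ∈ L, a ≤ c ∧ D.rk a < D.rk c ∧
      ∀ b ∈ L, a ≤ b → D.twistedDeg (D.slope a c) b ≤ D.twistedDeg (D.slope a c) a := by
  set S := {c | c ∈ L ∧ a ≤ c ∧ D.rk a < D.rk c}
  obtain ⟨_, ⟨c, hcS, rfl⟩, hmax⟩ :=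
    Set.exists_max_image (D.slope a '' S) id (D.finite_slope_image a S)
      ((show S.Nonempty from hne).image _)
  refine ⟨c, hcS.1, hcS.2.1, hcS.2.2, fun b hb hab => ?_⟩
  rcases (D.rk_mono hab).lt_or_eq with hlt | heq
  · exact (slope_le_iff hlt).1 (hmax _ ⟨b, ⟨hb, hab, hlt⟩, rfl⟩)
  · simp only [twistedDeg, heq, D.deg_eq_of_le_of_rk_eq hab heq, le_refl]

theorem supClosed_twistedDeg_eq {a : α} {μ : ℚ}
    (hle : ∀ b ∈ L, a ≤ b → D.twistedDeg μ b ≤ D.twistedDeg μ a) :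
    SupClosed {b | b ∈ L ∧ a ≤ b ∧ D.twistedDeg μ b = D.twistedDeg μ a} := by
  rintro b ⟨hb, hab, hbμ⟩ c ⟨hc, hac, hcμ⟩
  have hinf := hle _ (L.inf_mem hb hc) (le_inf hab hac)
  have hsup := hle _ (L.sup_mem hb hc) (hab.trans le_sup_left)
  have := twistedDeg_sup_add_inf (D := D) hb hc μ
  exact ⟨L.sup_mem hb hc, hab.trans le_sup_left, by linarith⟩

theorem exists_maxDestabilizing [WellFoundedGT α] {a : α}
    (hne : ∃ c ∈ L, a ≤ c ∧ D.rk a < D.rk c) :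
    ∃ b ∈ L, a ≤ b ∧ D.rk a < D.rk b ∧ D.Semistable a b ∧
      ∀ c ∈ L, b < c → D.rk b < D.rk c → D.slope b c < D.slope a b := by
  obtain ⟨c₀, hc₀, hac₀, hrk₀, hle⟩ := exists_twistedDeg_le hne
  set μ := D.slope a c₀
  have hc₀μ : D.twistedDeg μ c₀ = D.twistedDeg μ a :=
    le_antisymm (hle c₀ hc₀ hac₀) ((le_slope_iff hrk₀).1 le_rfl)
  obtain ⟨b, ⟨hb, hab, hbμ⟩, hgreatest⟩ :=
    (supClosed_twistedDeg_eq hle).exists_isGreatest ⟨c₀, hc₀, hac₀, hc₀μ⟩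
  have hrk : D.rk a < D.rk b := hrk₀.trans_le (D.rk_mono (hgreatest ⟨hc₀, hac₀, hc₀μ⟩))
  have hslope : D.slope a b = μ :=
    le_antisymm ((slope_le_iff hrk).2 hbμ.le) ((le_slope_iff hrk).2 hbμ.ge)
  refine ⟨b, hb, hab, hrk, fun c hc hac _ => ?_, fun c hc hbc hrkc => ?_⟩
  · rcases (D.rk_mono hac.le).lt_or_eq with hlt | heq
    · exact Or.inr (hslope ▸ (slope_le_iff hlt).2 (hle c hc hac.le))
    · exact Or.inl heq.symm
  · rw [hslope]
    by_contra! hμc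
    have hcμ : D.twistedDeg μ c = D.twistedDeg μ a :=
      le_antisymm (hle c hc (hab.trans hbc.le)) (hbμ ▸ (le_slope_iff hrkc).1 hμc)
    exact (hgreatest ⟨hc, hab.trans hbc.le, hcμ⟩).not_gt hbc

variable (D) in
theorem exists_semistable_step [BoundedOrder α] [WellFoundedGT α] (htop : ⊤ ∈ L) {a : α}
    (hlt : a < ⊤) :
    ∃ b ∈ L, a < b ∧ D.Semistable a b ∧ ∀ c ∈ L, b < c → D.SlopeGT a b b c := by
  by_cases hne : ∃ c ∈ L, a ≤ c ∧ D.rk a < D.rk c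
  · obtain ⟨b, hb, hab, hrk, hss, hslope⟩ := exists_maxDestabilizing hne
    refine ⟨b, hb, hab.lt_of_ne (by rintro rfl; exact hrk.ne rfl), hss, fun c hc hbc => ?_⟩
    rcases (D.rk_mono hbc.le).lt_or_eq with hlt | heq
    · exact Or.inr ⟨hrk.ne, hlt.ne, hslope c hc hbc hlt⟩
    · exact Or.inl heq
  · push Not at hne
    refine ⟨⊤, htop, hlt, fun c hc hac _ => Or.inl ?_, fun c _ hc => (not_top_lt hc).elim⟩
    exact le_antisymm (hne c hc hac.le) (D.rk_mono hac.le)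

variable (D) in
structure IsHNChain (s : ℕ) (g : ℕ → α) : Prop where
  lt : ∀ i < s, g i < g (i + 1)
  mem : ∀ i ≤ s, g i ∈ L
  semistable : ∀ i < s, D.Semistable (g i) (g (i + 1))
  slopeGT : ∀ i, i + 2 ≤ s → D.SlopeGT (g i) (g (i + 1)) (g (i + 1)) (g (i + 2))

theorem isHNChain_zero {a : α} (ha : a ∈ L) : D.IsHNChain 0 fun _ => a where
  lt _ h := absurd h (Nat.not_lt_zero _)
  mem _ _ := ha
  semistable _ h := absurd h (Nat.not_lt_zero _)
  slopeGT _ h := absurd h (by omega)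

theorem IsHNChain.cons {s : ℕ} {g : ℕ → α} (hg : D.IsHNChain s g) {a : α} (ha : a ∈ L)
    (hlt : a < g 0) (hss : D.Semistable a (g 0))
    (hgt : 0 < s → D.SlopeGT a (g 0) (g 0) (g 1)) :
    D.IsHNChain (s + 1) fun i => if i = 0 then a else g (i - 1) where
  lt i hi := by
    rcases i with _ | i
    · simpa using hlt
    · simpa using hg.lt i (by omega)
  mem i hi := by
    rcases i with _ | i
    · simpa using ha
    · simpa using hg.mem i (by omega)
  semistable i hi := by
    rcases i with _ | i
    · simpa using hss
    · simpa using hg.semistable i (by omega)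
  slopeGT i hi := by
    rcases i with _ | i
    · simpa using hgt (by omega)
    · simpa using hg.slopeGT i (by omega)

variable (D) in
theorem exists_isHNChain [BoundedOrder α] [WellFoundedGT α] (htop : ⊤ ∈ L) {a : α}
    (ha : a ∈ L) :
    ∃ s g, g 0 = a ∧ g s = ⊤ ∧ D.IsHNChain s g := by
  induction a using WellFoundedGT.induction with
  | _ a ih =>
  rcases (le_top : a ≤ ⊤).eq_or_lt with rfl | hlt
  · exact ⟨0, fun _ => ⊤, rfl, rfl, isHNChain_zero ha⟩
  obtain ⟨b, hb, hab, hss, hgt⟩ := D.exists_semistable_step htop hlt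
  obtain ⟨s, g, rfl, hgs, hg⟩ := ih _ hab hb
  exact ⟨s + 1, _, rfl, by simpa using hgs,
    hg.cons ha hab hss fun hs => hgt _ (hg.mem 1 hs) (hg.lt 0 hs)⟩

variable (D) in
theorem exists_hnFiltration [BoundedOrder α] [WellFoundedGT α] (hbot : ⊥ ∈ L)
    (htop : ⊤ ∈ L) :
    ∃ (s : ℕ) (F : Fin (s + 1) → α), F 0 = ⊥ ∧ F (Fin.last s) = ⊤ ∧
      (∀ i : Fin s, F i.castSucc < F i.succ) ∧ (∀ i, F i ∈ L) ∧
      (∀ i : Fin s, D.Semistable (F i.castSucc) (F i.succ)) ∧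
      ∀ i j : Fin s, (j : ℕ) = i + 1 →
        D.SlopeGT (F i.castSucc) (F i.succ) (F j.castSucc) (F j.succ) := by
  obtain ⟨s, g, hg0, hgs, hg⟩ := D.exists_isHNChain htop hbot
  refine ⟨s, fun i => g i, by simpa using hg0, hgs, fun i => hg.lt i i.isLt,
    fun i => hg.mem i i.is_le, fun i => hg.semistable i i.isLt, fun i j hij => ?_⟩
  simp only [Fin.val_castSucc, Fin.val_succ, hij]
  exact hg.slopeGT i (by omega)

end StabilityData

namespace Submodule

variable {ι R M : Type*} [DecidableEq ι] [Semiring R] [AddCommMonoid M] [Module R M]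
  {ℳ : ι → Submodule R M} [DirectSum.Decomposition ℳ] {N N' : Submodule R M}

theorem isHomogeneous_iff_eq_iSup_inf : N.IsHomogeneous ℳ ↔ N = ⨆ i, N ⊓ ℳ i := by
  classical
  constructor
  · refine fun h => le_antisymm (fun x hx => ?_) (iSup_le fun _ => inf_le_left)
    rw [← DirectSum.sum_support_decompose ℳ x]
    exact sum_mem fun i _ => mem_iSup_of_mem i ⟨h i hx, (DirectSum.decompose ℳ x i).2⟩
  · intro h i x hx
    rw [h] at hx
    refine iSup_induction (motive := fun x => (DirectSum.decompose ℳ x i : M) ∈ N) _ hx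
      (fun j y hy => ?_) (by simp) (fun y z hy hz => by simpa using add_mem hy hz)
    rcases eq_or_ne j i with rfl | hne
    · rw [DirectSum.decompose_of_mem_same ℳ hy.2]
      exact hy.1
    · rw [DirectSum.decompose_of_mem_ne ℳ hy.2 hne]
      exact zero_mem _

theorem IsHomogeneous.inf (h : N.IsHomogeneous ℳ) (h' : N'.IsHomogeneous ℳ) :
    (N ⊓ N').IsHomogeneous ℳ :=
  fun i _ hm => ⟨h i hm.1, h' i hm.2⟩

theorem IsHomogeneous.sup (h : N.IsHomogeneous ℳ) (h' : N'.IsHomogeneous ℳ) :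
    (N ⊔ N').IsHomogeneous ℳ := by
  intro i m hm
  obtain ⟨n, hn, n', hn', rfl⟩ := mem_sup.1 hm
  simpa using add_mem_sup (h i hn) (h' i hn')

theorem IsHomogeneous.sup_inf_eq (h : N.IsHomogeneous ℳ) (h' : N'.IsHomogeneous ℳ) (i : ι) :
    (N ⊔ N') ⊓ ℳ i = N ⊓ ℳ i ⊔ N' ⊓ ℳ i := by
  refine le_antisymm ?_ (sup_le (inf_le_inf_right _ le_sup_left) (inf_le_inf_right _ le_sup_right))
  rintro _ ⟨hx, hxi⟩
  obtain ⟨n, hn, n', hn', rfl⟩ := mem_sup.1 hx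
  rw [← DirectSum.decompose_of_mem_same ℳ hxi]
  simpa using add_mem_sup (⟨h i hn, SetLike.coe_mem _⟩ : _ ∈ N ⊓ ℳ i)
    (⟨h' i hn', SetLike.coe_mem _⟩ : _ ∈ N' ⊓ ℳ i)

end Submodule

section LambdaModule

variable {ℳ : ℤ → Submodule k V} [DirectSum.Decomposition ℳ]
  {lam : A →ₗ[k] V →ₗ[k] V}

theorem isLambdaSubmodule_iff {N : Submodule k V} :
    IsLambdaSubmodule ℳ lam N ↔ N.IsHomogeneous ℳ ∧ ∀ a, ∀ v ∈ N, lam a v ∈ N := by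
  rw [IsLambdaSubmodule, Submodule.isHomogeneous_iff_eq_iSup_inf]

variable (ℳ lam) in
def lambdaSublattice : Sublattice (Submodule k V) where
  carrier := {N | IsLambdaSubmodule ℳ lam N}
  supClosed' N hN N' hN' := by
    obtain ⟨hh, hs⟩ := isLambdaSubmodule_iff.1 hN
    obtain ⟨hh', hs'⟩ := isLambdaSubmodule_iff.1 hN'
    refine isLambdaSubmodule_iff.2 ⟨hh.sup hh', fun a v hv => ?_⟩
    obtain ⟨n, hn, n', hn', rfl⟩ := Submodule.mem_sup.1 hv
    rw [map_add]
    exact Submodule.add_mem_sup (hs a n hn) (hs' a n' hn')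
  infClosed' N hN N' hN' := by
    obtain ⟨hh, hs⟩ := isLambdaSubmodule_iff.1 hN
    obtain ⟨hh', hs'⟩ := isLambdaSubmodule_iff.1 hN'
    exact isLambdaSubmodule_iff.2
      ⟨hh.inf hh', fun a v hv => ⟨hs a v hv.1, hs' a v hv.2⟩⟩

theorem mem_lambdaSublattice {N : Submodule k V} :
    N ∈ lambdaSublattice ℳ lam ↔ IsLambdaSubmodule ℳ lam N := Iff.rfl

theorem bot_mem_lambdaSublattice : ⊥ ∈ lambdaSublattice ℳ lam := by
  refine mem_lambdaSublattice.2 (isLambdaSubmodule_iff.2 ⟨fun i m hm => ?_, fun a v hv => ?_⟩)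
  · simp [(Submodule.mem_bot k).1 hm]
  · simp [(Submodule.mem_bot k).1 hv]

theorem top_mem_lambdaSublattice : ⊤ ∈ lambdaSublattice ℳ lam :=
  mem_lambdaSublattice.2 (isLambdaSubmodule_iff.2 ⟨fun _ _ _ => trivial, fun _ _ _ => trivial⟩)

end LambdaModule

section Dimensions

variable [FiniteDimensional k V] {ℳ : ℤ → Submodule k V} {N N' : Submodule k V}

theorem dimAt_mono (h : N ≤ N') (i : ℤ) : dimAt ℳ N i ≤ dimAt ℳ N' i := by
  unfold dimAt
  exact_mod_cast Submodule.finrank_mono (inf_le_inf_right (ℳ i) h)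

theorem dimAt_mem_Icc (N : Submodule k V) (i : ℤ) :
    dimAt ℳ N i ∈ Set.Icc 0 (Module.finrank k V : ℤ) :=
  ⟨Int.natCast_nonneg _, by unfold dimAt; exact_mod_cast Submodule.finrank_le _⟩

theorem dimAt_sup_add_dimAt_inf [DirectSum.Decomposition ℳ] (h : N.IsHomogeneous ℳ)
    (h' : N'.IsHomogeneous ℳ) (i : ℤ) :
    dimAt ℳ (N ⊔ N') i + dimAt ℳ (N ⊓ N') i = dimAt ℳ N i + dimAt ℳ N' i := by
  unfold dimAt
  rw [h.sup_inf_eq h' i, inf_inf_distrib_right]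
  exact_mod_cast Submodule.finrank_sup_add_finrank_inf_eq _ _

end Dimensions

section LambdaStability

variable [FiniteDimensional k V] (ℳ : ℤ → Submodule k V) [DirectSum.Decomposition ℳ]
  (lam : A →ₗ[k] V →ₗ[k] V) (p q θp θq : ℤ)

theorem dimAt_sup_add_dimAt_inf_of_mem {N N' : Submodule k V} (hN : N ∈ lambdaSublattice ℳ lam)
    (hN' : N' ∈ lambdaSublattice ℳ lam) (i : ℤ) :
    (dimAt ℳ (N ⊔ N') i : ℚ) + dimAt ℳ (N ⊓ N') i = dimAt ℳ N i + dimAt ℳ N' i := by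
  exact_mod_cast dimAt_sup_add_dimAt_inf (isLambdaSubmodule_iff.1 hN).1
    (isLambdaSubmodule_iff.1 hN').1 i

noncomputable def lambdaStabilityData : StabilityData (lambdaSublattice ℳ lam) where
  rk N := dimAt ℳ N p + dimAt ℳ N q
  deg N := θp * dimAt ℳ N p + θq * dimAt ℳ N q
  rk_mono N N' h :=
    add_le_add (by exact_mod_cast dimAt_mono h p) (by exact_mod_cast dimAt_mono h q)
  rk_sup_add_rk_inf N hN N' hN' := by
    linear_combination dimAt_sup_add_dimAt_inf_of_mem ℳ lam hN hN' p +
      dimAt_sup_add_dimAt_inf_of_mem ℳ lam hN hN' q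
  deg_sup_add_deg_inf N hN N' hN' := by
    linear_combination θp * dimAt_sup_add_dimAt_inf_of_mem ℳ lam hN hN' p +
      θq * dimAt_sup_add_dimAt_inf_of_mem ℳ lam hN hN' q
  deg_eq_of_le_of_rk_eq N N' h hrk := by
    have hp : (dimAt ℳ N p : ℚ) ≤ dimAt ℳ N' p := by exact_mod_cast dimAt_mono h p
    have hq : (dimAt ℳ N q : ℚ) ≤ dimAt ℳ N' q := by exact_mod_cast dimAt_mono h q
    rw [show (dimAt ℳ N p : ℚ) = dimAt ℳ N' p by linarith,
      show (dimAt ℳ N q : ℚ) = dimAt ℳ N' q by linarith]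
  finite_range := by
    refine (((Set.finite_Icc 0 (Module.finrank k V : ℤ)).prod
      (Set.finite_Icc 0 (Module.finrank k V : ℤ))).image
      fun d : ℤ × ℤ => ((d.1 + d.2 : ℚ), (θp * d.1 + θq * d.2 : ℚ))).subset ?_
    rintro _ ⟨N, rfl⟩
    exact ⟨(dimAt ℳ N p, dimAt ℳ N q), ⟨dimAt_mem_Icc N p, dimAt_mem_Icc N q⟩, rfl⟩

variable {ℳ lam p q θp θq}

local notation "𝒟" => lambdaStabilityData ℳ lam p q θp θq

theorem slopeQ_qdim (F N : Submodule k V) :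
    slopeQ θp θq (qdim ℳ F N p) (qdim ℳ F N q) = (𝒟).slope F N := by
  simp only [slopeQ, qdim, StabilityData.slope, lambdaStabilityData]
  push_cast
  congr 1 <;> ring

theorem lambdaStabilityData_rk_eq_iff {F N : Submodule k V} :
    (𝒟).rk F = (𝒟).rk N ↔ dimAt ℳ F p + dimAt ℳ F q = dimAt ℳ N p + dimAt ℳ N q := by
  simp only [lambdaStabilityData]
  norm_cast

theorem qdim_add_qdim_ne_zero_iff {F N : Submodule k V} :
    qdim ℳ F N p + qdim ℳ F N q ≠ 0 ↔ (𝒟).rk F ≠ (𝒟).rk N := by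
  rw [Ne, Ne, lambdaStabilityData_rk_eq_iff, qdim, qdim]
  omega

theorem qdim_eq_zero_and_qdim_eq_zero_iff {F N : Submodule k V} (h : F ≤ N) :
    qdim ℳ F N p = 0 ∧ qdim ℳ F N q = 0 ↔ (𝒟).rk F = (𝒟).rk N := by
  have hp := dimAt_mono (ℳ := ℳ) h p
  have hq := dimAt_mono (ℳ := ℳ) h q
  rw [lambdaStabilityData_rk_eq_iff, qdim, qdim]
  omega

theorem semistableQuot_of_semistable {F G : Submodule k V} (h : (𝒟).Semistable F G) :
    SemistableQuot ℳ lam p q θp θq F G := by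
  intro N hN hFN hNG
  by_cases hrk : (𝒟).rk F = (𝒟).rk N
  · exact Or.inl ((qdim_eq_zero_and_qdim_eq_zero_iff hFN.le).2 hrk)
  · refine Or.inr ⟨qdim_add_qdim_ne_zero_iff.2 hrk, ?_⟩
    rw [slopeQ_qdim (lam := lam), slopeQ_qdim (lam := lam)]
    exact (h N hN hFN hNG).resolve_left (Ne.symm hrk)

theorem quotGT_of_slopeGT {F₁ G₁ F₂ G₂ : Submodule k V} (h₂ : F₂ ≤ G₂)
    (h : (𝒟).SlopeGT F₁ G₁ F₂ G₂) : QuotGT ℳ p q θp θq F₁ G₁ F₂ G₂ := by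
  rcases h with hrk | ⟨hrk₁, hrk₂, hslope⟩
  · exact Or.inl ((qdim_eq_zero_and_qdim_eq_zero_iff h₂).2 hrk)
  · refine Or.inr ⟨qdim_add_qdim_ne_zero_iff.2 hrk₁, qdim_add_qdim_ne_zero_iff.2 hrk₂, ?_⟩
    rwa [slopeQ_qdim (lam := lam), slopeQ_qdim (lam := lam)]

end LambdaStability

theorem lambdaModule_hn_filtration_exists_general
    [FiniteDimensional k V]
    (ℳ : ℤ → Submodule k V) (p q : ℤ)
    (hdec : DirectSum.IsInternal fun i => ℳ i)
    (lam : A →ₗ[k] V →ₗ[k] V) :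
    ∃ (s : ℕ) (F : Fin (s + 1) → Submodule k V),
      F 0 = ⊥ ∧ F (Fin.last s) = ⊤ ∧
      (∀ i : Fin s, F i.castSucc < F i.succ) ∧
      (∀ i, IsLambdaSubmodule ℳ lam (F i)) ∧
      (∀ i : Fin s,
        SemistableQuot ℳ lam p q (dimAt ℳ (⊤ : Submodule k V) q)
          (-(dimAt ℳ (⊤ : Submodule k V) p)) (F i.castSucc) (F i.succ)) ∧
      (∀ i j : Fin s, (j : ℕ) = (i : ℕ) + 1 →
        QuotGT ℳ p q (dimAt ℳ (⊤ : Submodule k V) q) (-(dimAt ℳ (⊤ : Submodule k V) p))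
          (F i.castSucc) (F i.succ) (F j.castSucc) (F j.succ)) := by
  let _ := hdec.chooseDecomposition
  obtain ⟨s, F, hbot, htop, hlt, hmem, hss, hgt⟩ :=
    (lambdaStabilityData ℳ lam p q (dimAt ℳ ⊤ q) (-dimAt ℳ ⊤ p)).exists_hnFiltration
      bot_mem_lambdaSublattice top_mem_lambdaSublattice
  exact ⟨s, F, hbot, htop, hlt, hmem, fun i => semistableQuot_of_semistable (hss i),
    fun i j hij => quotGT_of_slopeGT (hlt j).le (hgt i j hij)⟩

/-- Every `[p,q]`-graded `λ`-module over an `ℕ`-graded `k`-algebra `A` with `A₀ = k`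
and finite-dimensional graded pieces admits a Harder–Narasimhan filtration:
a chain `0 = M⁰ ⊂ M¹ ⊂ ⋯ ⊂ Mˢ = M` of `λ`-submodules whose successive quotients are
semistable with respect to `(θp,θq) = (dim M_q, -dim M_p)` and strictly decreasing
in the sense `M¹/M⁰ ≻ M²/M¹ ≻ ⋯ ≻ Mˢ/Mˢ⁻¹`. -/
theorem lambdaModule_hn_filtration_exists
    (𝒜 : ℕ → Submodule k A) [GradedAlgebra 𝒜]
    (hA0 : Module.finrank k ↥(𝒜 0) = 1) (hAfin : ∀ n, FiniteDimensional k ↥(𝒜 n))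
    [FiniteDimensional k V]
    (ℳ : ℤ → Submodule k V) (p q : ℤ)
    (hdec : DirectSum.IsInternal fun i => ℳ i)
    (hsupp : ∀ i : ℤ, i < p ∨ q < i → ℳ i = ⊥)
    (lam : A →ₗ[k] V →ₗ[k] V)
    (hgr : ∀ n : ℕ, ∀ a ∈ 𝒜 n, ∀ i : ℤ, ∀ v ∈ ℳ i, lam a v ∈ ℳ (i + n)) :
    ∃ (s : ℕ) (F : Fin (s + 1) → Submodule k V),
      F 0 = ⊥ ∧ F (Fin.last s) = ⊤ ∧
      (∀ i : Fin s, F i.castSucc < F i.succ) ∧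
      (∀ i, IsLambdaSubmodule ℳ lam (F i)) ∧
      (∀ i : Fin s,
        SemistableQuot ℳ lam p q (dimAt ℳ (⊤ : Submodule k V) q)
          (-(dimAt ℳ (⊤ : Submodule k V) p)) (F i.castSucc) (F i.succ)) ∧
      (∀ i j : Fin s, (j : ℕ) = (i : ℕ) + 1 →
        QuotGT ℳ p q (dimAt ℳ (⊤ : Submodule k V) q) (-(dimAt ℳ (⊤ : Submodule k V) p))
          (F i.castSucc) (F i.succ) (F j.castSucc) (F j.succ)) :=
  lambdaModule_hn_filtration_exists_general ℳ p q hdec lam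

end
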